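/- Fix N ≥ 3 and an integer k ≥ 2, set n_ℓ = k^{N^{3ℓ}} and f_ℓ(x) = x_N ∏_{i=1}^{N−1} sin²(n_ℓ xᵢ). Let 𝓵 = (ℓ₁,…,ℓ_N) ∈ {1,…,k}^N have not all entries equal, let H_𝓵(x) be the N×N matrix with (i,j) entry ∂ᵢ∂ⱼ f_{ℓᵢ}(x), set ℓ* = max_i ℓᵢ, I = {i : ℓᵢ = ℓ*}, and m = #I. There is a constant C > 0 depending only on N such that: for every subset J ⊆ {1,…,N} with #J = m, there exist a natural number α ≤ m and complex coefficients (c_z)_{z ∈ Λ}, where Λ = {z ∈ ℤ^{N−1} : |zᵢ| ≤ N−1 for all i}, such that det(H_𝓵^{(I,J)})(x) = x_N^α Σ_{z ∈ Λ} c_z e^{2 n_{ℓ*} i z·x̂} for all x = (x̂, x_N) ∈ ℝ^{N−1} × ℝ, and |c_z| ≤ C n_{ℓ*}^{2m} for all z ∈ Λ. -/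

import Mathlib

open MeasureTheory Real Filter

noncomputable section

abbrev Eu (N : ℕ) : Type := EuclideanSpace ℝ (Fin N)

def ebasis {N : ℕ} (i : Fin N) : Eu N := EuclideanSpace.single i 1

/-- Partial derivative `∂ᵢ u (x)`. -/
def pd {N : ℕ} (u : Eu N → ℝ) (i : Fin N) (x : Eu N) : ℝ :=
  fderiv ℝ u x (ebasis i)

/-- Second partial derivative `∂ᵢ∂ⱼ u (x)`. -/
def pd2 {N : ℕ} (u : Eu N → ℝ) (i j : Fin N) (x : Eu N) : ℝ :=
  fderiv ℝ (fun y => fderiv ℝ u y (ebasis j)) x (ebasis i)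

/-- The determinant of the Hessian matrix `det (D²u)(x)`. -/
def hessDet {N : ℕ} (u : Eu N → ℝ) (x : Eu N) : ℝ :=
  (Matrix.of fun i j => pd2 u i j x).det

/-- The Besov norm `‖u‖_{s,p}`. -/
def besov (N : ℕ) (s p : ℝ) (u : Eu N → ℝ) : ℝ :=
  (∫ x : Eu N, |u x| ^ p) ^ (1/p)
  + (∫ x : Eu N, ‖fderiv ℝ u x‖ ^ p) ^ (1/p)
  + (∫ x : Eu N, ∫ y : Eu N,
      ‖fderiv ℝ u x - fderiv ℝ u y‖ ^ p / ‖x - y‖ ^ ((N : ℝ) + (s-1)*p)) ^ (1/p)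

/-- The index of the last coordinate (`x_N`) of `ℝ^N`. -/
def lastIdx (N : ℕ) (hN : 0 < N) : Fin N := ⟨N - 1, Nat.sub_lt hN Nat.one_pos⟩

/-- The lacunary sequence `n_ℓ = k^{N^{3ℓ}}`. -/
def nseq (N k l : ℕ) : ℕ := k ^ (N ^ (3 * l))

/-- `∏_{i=1}^{N-1} sin²(n xᵢ)`. -/
def gfun (N : ℕ) (n : ℝ) (x : Eu N) : ℝ :=
  ∏ i : Fin (N-1), (Real.sin (n * x (Fin.castLE (Nat.sub_le N 1) i)))^2

/-- The atom `f(x) = x_N ∏_{i=1}^{N-1} sin²(n xᵢ)`. -/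
def ffun (N : ℕ) (hN : 0 < N) (n : ℝ) (x : Eu N) : ℝ :=
  x (lastIdx N hN) * gfun N n x

/-- `w_k(x) = Σ_{ℓ=1}^k n_ℓ^{-(2-2/N)} ℓ^{-1/N} ∏_{i=1}^{N-1} sin²(n_ℓ xᵢ)`. -/
def wfun (N k : ℕ) (x : Eu N) : ℝ :=
  ∑ l ∈ Finset.Icc 1 k,
    ((nseq N k l : ℝ)) ^ (-(2 - 2/(N:ℝ))) * ((l : ℝ)) ^ (-(1/(N:ℝ))) * gfun N (nseq N k l) x

/-- `u_k(x) = χ(x) w_k(x) x_N`. -/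
def ufun (N : ℕ) (hN : 0 < N) (k : ℕ) (χ : Eu N → ℝ) (x : Eu N) : ℝ :=
  χ x * wfun N k x * x (lastIdx N hN)

/-- The `C²` norm: supremum of all partial derivatives of order `≤ 2`. -/
def C2norm {N : ℕ} (φ : Eu N → ℝ) : ℝ :=
  ⨆ x : Eu N, max |φ x| (max (‖iteratedFDeriv ℝ 1 φ x‖) (‖iteratedFDeriv ℝ 2 φ x‖))

/-- The `C¹` norm: supremum of all partial derivatives of order `≤ 1`. -/
def C1norm {N : ℕ} (φ : Eu N → ℝ) : ℝ :=
  ⨆ x : Eu N, max |φ x| (‖iteratedFDeriv ℝ 1 φ x‖)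

/-- Glue `x̂ ∈ ℝ^{N-1}` and `t ∈ ℝ` into the point `(x̂, t) ∈ ℝ^N`. -/
def glue (N : ℕ) (hN : 0 < N) (xh : Eu (N-1)) (t : ℝ) : Eu N :=
  WithLp.toLp 2 (fun i => if h : (i : ℕ) < N - 1 then xh ⟨i, h⟩ else t)

/-!
Write `f = ∏ₖ φₖ(xₖ)` with `φₖ = sin²(n ·)` for `k < N` and `φ_N = id`. Then
`∂ᵢ∂ⱼ f = x_N^{εᵢⱼ} Tᵢⱼ(x̂)`, where `εᵢⱼ = 1` unless `i` or `j` is `N`, and `Tᵢⱼ` is a product of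
derivatives of order `≤ 2` of the `sin²(n xₖ)`: a polynomial in the `e^{± 2 i n xₖ}` with
frequencies in `{-1, 0, 1}^{N-1}` and coefficient mass `≤ (2n)²` (and `T_{NN} = 0`). In each
nonvanishing term of the Leibniz expansion of a minor the exponents `εᵢⱼ` add up to the same `α`,
so the minor is `x_N^α det (Tᵢⱼ)`, and `det (Tᵢⱼ)` has frequencies in `[-m, m]^{N-1}` and
coefficient mass `≤ m! (2n)^{2m}`. All rows of the minor belong to the same `n = n_{ℓ*}`, and
`m ≤ N - 1` because the `ℓᵢ` are not all equal.
-/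

open scoped ContDiff

theorem Matrix.det_of_pow_one_sub_mul {R n : Type*} [CommRing R] [Fintype n] [DecidableEq n]
    (t : R) (u v : n → ℕ) (T : Matrix n n R) (hT : ∀ a b, 1 < u a + v b → T a b = 0) :
    (Matrix.of fun a b => t ^ (1 - (u a + v b)) * T a b).det
      = t ^ (Fintype.card n - (∑ a, u a + ∑ b, v b)) * T.det := by
  rw [det_apply, det_apply, Finset.mul_sum]
  refine Finset.sum_congr rfl fun σ _ => ?_
  simp only [of_apply, Finset.prod_mul_distrib, Finset.prod_pow_eq_pow_sum, mul_smul_comm]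
  by_cases h0 : ∏ b, T (σ b) b = 0
  · simp [h0]
  have hle (b : n) : u (σ b) + v b ≤ 1 :=
    not_lt.mp fun h => h0 (Finset.prod_eq_zero (Finset.mem_univ b) (hT _ _ h))
  have hcard : ∑ b, (1 - (u (σ b) + v b)) + ∑ b, (u (σ b) + v b) = Fintype.card n := by
    simp [← Finset.sum_add_distrib, Nat.sub_add_cancel (hle _)]
  rw [Finset.sum_add_distrib, Equiv.sum_comp σ u] at hcard
  rw [show ∑ b, (1 - (u (σ b) + v b)) = Fintype.card n - (∑ a, u a + ∑ b, v b) by omega]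

lemma Finset.card_filter_eq_lt_card {ι β : Type*} [Fintype ι] [DecidableEq β] {l : ι → β}
    (h : ¬ ∀ i j, l i = l j) (c : β) : (univ.filter fun i => l i = c).card < Fintype.card ι := by
  push Not at h
  obtain ⟨i, j, hij⟩ := h
  by_cases hi : l i = c
  · exact card_lt_univ_of_notMem (x := j) (by simp [← hi, Ne.symm hij])
  · exact card_lt_univ_of_notMem (x := i) (by simp [hi])

section TrigPoly

variable {X G : Type*} [AddCommGroup G] [PartialOrder G]

/-- The frequencies `z j` may repeat: then a product of two such sums is again one, without
regrouping. -/
def IsTrigPoly (χ : AddChar G (X → ℂ)) (M : G) (B : ℝ) (f : X → ℂ) : Prop :=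
  ∃ (κ : Type) (_ : Fintype κ) (a : κ → ℂ) (z : κ → G),
    (∀ j, z j ∈ Set.Icc (-M) M) ∧ ∑ j, ‖a j‖ ≤ B ∧ f = ∑ j, a j • χ (z j)

variable {χ : AddChar G (X → ℂ)} {M M' : G} {B B' : ℝ} {f g : X → ℂ}

namespace IsTrigPoly

lemma nonneg (hf : IsTrigPoly χ M B f) : 0 ≤ B := by
  obtain ⟨κ, _, a, z, -, hB, -⟩ := hf
  exact (Finset.sum_nonneg fun j _ => norm_nonneg (a j)).trans hB

lemma mono [IsOrderedAddMonoid G] (hf : IsTrigPoly χ M B f) (hM : M ≤ M') (hB : B ≤ B') :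
    IsTrigPoly χ M' B' f := by
  obtain ⟨κ, _, a, z, hz, hB₀, rfl⟩ := hf
  exact ⟨κ, _, a, z, fun j => ⟨(neg_le_neg hM).trans (hz j).1, (hz j).2.trans hM⟩,
    hB₀.trans hB, rfl⟩

lemma zero : IsTrigPoly χ M 0 0 :=
  ⟨Empty, inferInstance, Empty.elim, Empty.elim, Empty.rec, by simp, by simp⟩

lemma single (a : ℂ) {z : G} (hz : z ∈ Set.Icc (-M) M) : IsTrigPoly χ M ‖a‖ (a • χ z) :=
  ⟨Unit, inferInstance, fun _ => a, fun _ => z, fun _ => hz, by simp, by simp⟩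

lemma one [IsOrderedAddMonoid G] (hM : 0 ≤ M) : IsTrigPoly χ M 1 1 := by
  simpa using single (χ := χ) 1 (z := 0) ⟨neg_nonpos.mpr hM, hM⟩

lemma add (hf : IsTrigPoly χ M B f) (hg : IsTrigPoly χ M B' g) :
    IsTrigPoly χ M (B + B') (f + g) := by
  obtain ⟨κ, _, a, z, hz, hB, rfl⟩ := hf
  obtain ⟨κ', _, a', z', hz', hB', rfl⟩ := hg
  refine ⟨κ ⊕ κ', inferInstance, Sum.elim a a', Sum.elim z z', ?_, ?_, ?_⟩
  · rintro (j | j)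
    exacts [hz j, hz' j]
  · simpa [Fintype.sum_sum_type] using add_le_add hB hB'
  · simp [Fintype.sum_sum_type]

lemma const_smul (c : ℂ) (hf : IsTrigPoly χ M B f) : IsTrigPoly χ M (‖c‖ * B) (c • f) := by
  obtain ⟨κ, _, a, z, hz, hB, rfl⟩ := hf
  refine ⟨κ, inferInstance, c • a, z, hz, ?_, ?_⟩
  · simpa [norm_mul, ← Finset.mul_sum] using mul_le_mul_of_nonneg_left hB (norm_nonneg c)
  · simp [Finset.smul_sum, smul_smul]

lemma mul [IsOrderedAddMonoid G] (hf : IsTrigPoly χ M B f) (hg : IsTrigPoly χ M' B' g) :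
    IsTrigPoly χ (M + M') (B * B') (f * g) := by
  have hB'₀ := hg.nonneg
  obtain ⟨κ, _, a, z, hz, hB, rfl⟩ := hf
  obtain ⟨κ', _, a', z', hz', hB', rfl⟩ := hg
  refine ⟨κ × κ', inferInstance, fun p => a p.1 * a' p.2, fun p => z p.1 + z' p.2, ?_, ?_, ?_⟩
  · rintro ⟨j, j'⟩
    exact ⟨(neg_add M M').symm ▸ add_le_add (hz j).1 (hz' j').1,
      add_le_add (hz j).2 (hz' j').2⟩
  · simp only [norm_mul, Fintype.sum_prod_type, ← Finset.sum_mul_sum]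
    exact mul_le_mul hB hB' (Finset.sum_nonneg fun j _ => norm_nonneg _)
      ((Finset.sum_nonneg fun j _ => norm_nonneg _).trans hB)
  · simp only [Fintype.sum_prod_type, Finset.sum_mul_sum, smul_mul_smul_comm,
      AddChar.map_add_eq_mul]

lemma sum {ι : Type*} {s : Finset ι} {f : ι → X → ℂ} (hf : ∀ i ∈ s, IsTrigPoly χ M B (f i)) :
    IsTrigPoly χ M (s.card * B) (∑ i ∈ s, f i) := by
  classical
  induction s using Finset.induction_on with
  | empty => simpa using zero
  | insert i s hi ih =>
    rw [Finset.sum_insert hi, Finset.card_insert_of_notMem hi, Nat.cast_succ, add_one_mul,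
      add_comm _ B]
    exact (hf i (s.mem_insert_self i)).add (ih fun j hj => hf j (Finset.mem_insert_of_mem hj))

lemma prod [IsOrderedAddMonoid G] {ι : Type*} {s : Finset ι} {f : ι → X → ℂ} {M : ι → G}
    {B : ι → ℝ} (hf : ∀ i ∈ s, IsTrigPoly χ (M i) (B i) (f i)) :
    IsTrigPoly χ (∑ i ∈ s, M i) (∏ i ∈ s, B i) (∏ i ∈ s, f i) := by
  classical
  induction s using Finset.induction_on with
  | empty => simpa using one (χ := χ) le_rfl
  | insert i s hi ih =>
    rw [Finset.sum_insert hi, Finset.prod_insert hi, Finset.prod_insert hi]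
    exact (hf i (s.mem_insert_self i)).mul (ih fun j hj => hf j (Finset.mem_insert_of_mem hj))

lemma det [IsOrderedAddMonoid G] {n : Type*} [Fintype n] [DecidableEq n]
    {T : Matrix n n (X → ℂ)} (hT : ∀ a b, IsTrigPoly χ M B (T a b)) :
    IsTrigPoly χ (Fintype.card n • M) ((Fintype.card n).factorial * B ^ Fintype.card n)
      T.det := by
  have hterm (σ : Equiv.Perm n) :
      IsTrigPoly χ (Fintype.card n • M) (B ^ Fintype.card n) (σ.sign • ∏ b, T (σ b) b) := by
    have hsign : ‖((σ.sign : ℤ) : ℂ)‖ = 1 := by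
      rcases Int.units_eq_one_or σ.sign with h | h <;> simp [h]
    have h := (prod (s := Finset.univ) fun b _ => hT (σ b) b).const_smul ((σ.sign : ℤ) : ℂ)
    rw [hsign, one_mul, Int.cast_smul_eq_zsmul] at h
    simpa [Units.smul_def] using h
  simpa [Matrix.det_apply, Fintype.card_perm] using sum fun σ (_ : σ ∈ Finset.univ) => hterm σ

lemma exists_coeff [LocallyFiniteOrder G] [DecidableEq G] (hf : IsTrigPoly χ M B f) {L U : G}
    (hL : L ≤ -M) (hU : M ≤ U) :
    ∃ c : G → ℂ, f = ∑ w ∈ Finset.Icc L U, c w • χ w ∧ ∀ w, ‖c w‖ ≤ B := by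
  obtain ⟨κ, _, a, z, hz, hB, rfl⟩ := hf
  refine ⟨fun w => ∑ j with z j = w, a j, ?_, fun w => ?_⟩
  · have hmaps : ∀ j ∈ Finset.univ, z j ∈ Finset.Icc L U := fun j _ =>
      Finset.mem_Icc.mpr ⟨hL.trans (hz j).1, (hz j).2.trans hU⟩
    rw [← Finset.sum_fiberwise_of_maps_to hmaps]
    refine Finset.sum_congr rfl fun w _ => ?_
    rw [Finset.sum_smul]
    exact Finset.sum_congr rfl fun j hj => by rw [(Finset.mem_filter.mp hj).2]
  · calc ‖∑ j with z j = w, a j‖ ≤ ∑ j with z j = w, ‖a j‖ := norm_sum_le _ _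
      _ ≤ ∑ j, ‖a j‖ := Finset.sum_le_sum_of_subset_of_nonneg (Finset.filter_subset _ _)
          fun j _ _ => norm_nonneg _
      _ ≤ B := hB

end IsTrigPoly

end TrigPoly

section Trigonometry

open Complex

lemma two_cos_two_mul_mul (n t : ℂ) :
    2 * cos (2 * n * t) = exp (2 * n * I * t) + exp (-(2 * n * I * t)) := by
  rw [two_cos]; ring_nf

lemma sin_mul_sq_eq_exp (n t : ℂ) :
    sin (n * t) ^ 2 = 1 / 2 - exp (2 * n * I * t) / 4 - exp (-(2 * n * I * t)) / 4 := by
  rw [Complex.sin_sq, Complex.cos_sq, ← mul_assoc]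
  linear_combination (-1 / 4 : ℂ) * two_cos_two_mul_mul n t

lemma sin_two_mul_mul_eq_exp (n t : ℂ) :
    sin (2 * n * t) = (exp (-(2 * n * I * t)) - exp (2 * n * I * t)) * I / 2 := by
  have := two_sin (2 * n * t)
  ring_nf at this ⊢
  linear_combination this / 2

end Trigonometry

def sinSq (n t : ℝ) : ℝ := sin (n * t) ^ 2

lemma deriv_sinSq (n : ℝ) : deriv (sinSq n) = fun t => n * sin (2 * n * t) := by
  funext t
  have := (((hasDerivAt_id' t).const_mul n).sin).fun_pow 2
  rw [show sinSq n = fun t => sin (n * t) ^ 2 from rfl, this.deriv,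
    show 2 * n * t = 2 * (n * t) by ring, sin_two_mul]
  ring

lemma deriv_const_mul_sin_mul (a b : ℝ) :
    deriv (fun t => a * sin (b * t)) = fun t => a * b * cos (b * t) := by
  funext t
  rw [(((hasDerivAt_id' t).const_mul b).sin.const_mul a).deriv]
  ring

lemma iterate_deriv_id_apply (r : ℕ) (t : ℝ) :
    deriv^[r] id t = t ^ (1 - r) * if r ≤ 1 then 1 else 0 := by
  match r with
  | 0 => simp
  | 1 => simp
  | r + 2 =>
    have h : deriv^[2] (id : ℝ → ℝ) = 0 := by ext; simp
    rw [Function.iterate_add_apply, h, Function.iterate_fixed (by ext; simp)]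
    simp

def hessOrder {N : ℕ} (i j : Fin N) : Fin N → ℕ := Pi.single i 1 + Pi.single j 1

lemma hessOrder_le_two {N : ℕ} (i j k : Fin N) : hessOrder i j k ≤ 2 := by
  simp only [hessOrder, Pi.add_apply, Pi.single_apply]
  split_ifs <;> omega

lemma sum_hessOrder {N : ℕ} (i j : Fin N) : ∑ k, hessOrder i j k = 2 := by
  simp [hessOrder, Finset.sum_add_distrib]

lemma pd_prod_iterate_deriv {N : ℕ} (φ : Fin N → ℝ → ℝ) (hφ : ∀ i, ContDiff ℝ ∞ (φ i))
    (r : Fin N → ℕ) (j : Fin N) :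
    pd (fun x : Eu N => ∏ i, deriv^[r i] (φ i) (x i)) j
      = fun x => ∏ i, deriv^[(r + Pi.single j 1 : Fin N → ℕ) i] (φ i) (x i) := by
  funext x
  have hd : ∀ i ∈ Finset.univ, HasFDerivAt (fun y : Eu N => deriv^[r i] (φ i) (y i))
      (deriv^[r i + 1] (φ i) (x i) • EuclideanSpace.proj (𝕜 := ℝ) i) x := by
    intro i _
    rw [Function.iterate_succ_apply']
    have hdiff := ((hφ i).iterate_deriv (r i)).differentiable (by simp)
    exact (hdiff _).hasDerivAt.comp_hasFDerivAt x (EuclideanSpace.proj (𝕜 := ℝ) i).hasFDerivAt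
  have hrest : ∏ i ∈ Finset.univ.erase j, deriv^[(r + Pi.single j 1 : Fin N → ℕ) i] (φ i) (x i)
      = ∏ i ∈ Finset.univ.erase j, deriv^[r i] (φ i) (x i) :=
    Finset.prod_congr rfl fun i hi => by simp [Finset.ne_of_mem_erase hi]
  rw [pd, (HasFDerivAt.finsetProd hd).fderiv, ← Finset.mul_prod_erase _ _ (Finset.mem_univ j),
    hrest]
  simp [ebasis, mul_comm]

lemma pd2_prod {N : ℕ} (φ : Fin N → ℝ → ℝ) (hφ : ∀ i, ContDiff ℝ ∞ (φ i)) (i j : Fin N) :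
    pd2 (fun x : Eu N => ∏ k, φ k (x k)) i j
      = fun x => ∏ k, deriv^[hessOrder i j k] (φ k) (x k) := by
  have h := pd_prod_iterate_deriv φ hφ 0 j
  simp only [Pi.zero_apply, Function.iterate_zero, id, zero_add] at h
  rw [show pd2 _ i j = pd (pd _ j) i from rfl, h, pd_prod_iterate_deriv φ hφ, hessOrder, add_comm]

section Hessian

variable {d : ℕ}

def expChar (d : ℕ) (n : ℝ) : AddChar (Fin d → ℤ) (Eu (d + 1) → ℂ) where
  toFun z x := Complex.exp (2 * n * Complex.I * ∑ i, (z i : ℂ) * (x i.castSucc : ℂ))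
  map_zero_eq_one' := by ext; simp
  map_add_eq_mul' z w := by
    ext x
    simp [add_mul, Finset.sum_add_distrib, mul_add, Complex.exp_add]

lemma expChar_single (n : ℝ) (k : Fin d) (c : ℤ) (x : Eu (d + 1)) :
    expChar d n (Pi.single k c) x = Complex.exp (2 * n * Complex.I * (c * x k.castSucc)) := by
  simp [expChar, Pi.single_apply]

lemma isTrigPoly_iterate_deriv_sinSq {n : ℝ} (hn : 0 ≤ n) (k : Fin d) {r : ℕ} (hr : r ≤ 2) :
    IsTrigPoly (expChar d n) (Pi.single k 1) ((2 * n) ^ r)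
      (fun x => ((deriv^[r] (sinSq n) (x k.castSucc) : ℝ) : ℂ)) := by
  have hpos : 0 ≤ (Pi.single k 1 : Fin d → ℤ) := Pi.single_nonneg.mpr zero_le_one
  have h1 : Pi.single k 1 ∈ Set.Icc (-Pi.single k 1) (Pi.single k 1) := ⟨neg_le_self hpos, le_rfl⟩
  have h0 : 0 ∈ Set.Icc (-Pi.single k 1) (Pi.single k 1) := ⟨neg_nonpos.mpr hpos, hpos⟩
  have h3 (a₀ a₁ a₂ : ℂ) : IsTrigPoly (expChar d n) (Pi.single k 1) (‖a₀‖ + ‖a₁‖ + ‖a₂‖)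
      (a₀ • expChar d n 0 + a₁ • expChar d n (Pi.single k 1)
        + a₂ • expChar d n (Pi.single k (-1))) := by
    refine ((IsTrigPoly.single a₀ h0).add (.single a₁ h1)).add (.single a₂ ?_)
    rw [Pi.single_neg]
    exact ⟨le_rfl, h1.1.trans h1.2⟩
  interval_cases r
  · convert (h3 (1 / 2) (-1 / 4) (-1 / 4)).mono le_rfl ?_ using 1
    · funext x
      simp [expChar_single, sinSq, sin_mul_sq_eq_exp]
      ring_nf
    · norm_num
  · convert (h3 0 (-(n * Complex.I / 2)) (n * Complex.I / 2)).mono le_rfl ?_ using 1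
    · funext x
      simp [expChar_single, deriv_sinSq, sin_two_mul_mul_eq_exp]
      ring_nf
    · simp [abs_of_nonneg hn]
      linarith
  · convert (h3 0 (n ^ 2) (n ^ 2)).mono le_rfl ?_ using 1
    · funext x
      simp only [Function.iterate_succ_apply', Function.iterate_zero_apply, deriv_sinSq,
        deriv_const_mul_sin_mul]
      simp [expChar_single]
      linear_combination (n : ℂ) ^ 2 * two_cos_two_mul_mul n (x k.castSucc)
    · simp
      nlinarith

def atomFactor (d : ℕ) (n : ℝ) : Fin (d + 1) → ℝ → ℝ :=
  Fin.snoc (α := fun _ => ℝ → ℝ) (fun _ => sinSq n) id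

lemma contDiff_atomFactor (n : ℝ) (i : Fin (d + 1)) : ContDiff ℝ ∞ (atomFactor d n i) := by
  induction i using Fin.lastCases with
  | last => simpa [atomFactor] using contDiff_id
  | cast k =>
    simp only [atomFactor, Fin.snoc_castSucc]
    unfold sinSq
    fun_prop

lemma ffun_eq_prod (h : 0 < d + 1) (n : ℝ) :
    ffun (d + 1) h n = fun x => ∏ k, atomFactor d n k (x k) := by
  funext x
  simp [ffun, gfun, Fin.prod_univ_castSucc, atomFactor, sinSq, mul_comm]
  rfl

def hessFactor (n : ℝ) (i j : Fin (d + 1)) (x : Eu (d + 1)) : ℝ :=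
  (if hessOrder i j (Fin.last d) ≤ 1 then 1 else 0) *
    ∏ k : Fin d, deriv^[hessOrder i j k.castSucc] (sinSq n) (x k.castSucc)

lemma pd2_ffun (h : 0 < d + 1) (n : ℝ) (i j : Fin (d + 1)) (x : Eu (d + 1)) :
    pd2 (ffun (d + 1) h n) i j x
      = x (Fin.last d) ^ (1 - hessOrder i j (Fin.last d)) * hessFactor n i j x := by
  rw [ffun_eq_prod, pd2_prod _ (contDiff_atomFactor n)]
  dsimp only
  rw [Fin.prod_univ_castSucc]
  simp only [atomFactor, Fin.snoc_castSucc, Fin.snoc_last, iterate_deriv_id_apply, hessFactor]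
  ring

lemma isTrigPoly_hessFactor {n : ℝ} (hn : 1 ≤ 2 * n) (i j : Fin (d + 1)) :
    IsTrigPoly (expChar d n) 1 ((2 * n) ^ 2) (fun x => (hessFactor n i j x : ℂ)) := by
  have hsum : ∑ k : Fin d, hessOrder i j k.castSucc ≤ 2 := by
    have := sum_hessOrder i j
    rw [Fin.sum_univ_castSucc] at this
    omega
  by_cases hlast : hessOrder i j (Fin.last d) ≤ 1
  · have hprod := IsTrigPoly.prod (s := Finset.univ)
      fun k _ => isTrigPoly_iterate_deriv_sinSq (by linarith) k (hessOrder_le_two i j k.castSucc)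
    rw [Finset.univ_sum_single, Finset.prod_pow_eq_pow_sum] at hprod
    have hfun : (fun x => (hessFactor n i j x : ℂ))
        = ∏ k : Fin d, fun x => ((deriv^[hessOrder i j k.castSucc] (sinSq n) (x k.castSucc)
            : ℝ) : ℂ) := by
      funext x
      simp [hessFactor, hlast, Finset.prod_apply]
    rw [hfun]
    exact hprod.mono le_rfl (pow_le_pow_right₀ hn hsum)
  · have hfun : (fun x => (hessFactor n i j x : ℂ)) = 0 := by
      funext x
      simp [hessFactor, hlast]
    rw [hfun]
    exact IsTrigPoly.zero.mono le_rfl (sq_nonneg _)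

lemma exists_ofReal_det_pd2_ffun_eq_pow_mul (h : 0 < d + 1) (n : ℝ) {m : ℕ}
    (row col : Fin m → Fin (d + 1)) :
    ∃ α ≤ m, ∀ x : Eu (d + 1),
      (((Matrix.of fun a b => pd2 (ffun (d + 1) h n) (row a) (col b) x).det : ℝ) : ℂ)
        = (x (Fin.last d) : ℂ) ^ α
          * (Matrix.of fun a b y => (hessFactor n (row a) (col b) y : ℂ)).det x := by
  set u : Fin m → ℕ := fun a => (Pi.single (row a) 1 : Fin (d + 1) → ℕ) (Fin.last d)
  set v : Fin m → ℕ := fun b => (Pi.single (col b) 1 : Fin (d + 1) → ℕ) (Fin.last d)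
  refine ⟨m - (∑ a, u a + ∑ b, v b), Nat.sub_le _ _, fun x => ?_⟩
  have hT (a b : Fin m) (hab : 1 < u a + v b) : (hessFactor n (row a) (col b) x : ℂ) = 0 := by
    simp [hessFactor, hessOrder, u, v, not_le.mpr hab]
  calc (((Matrix.of fun a b => pd2 (ffun (d + 1) h n) (row a) (col b) x).det : ℝ) : ℂ)
      = (Matrix.of fun a b => (x (Fin.last d) : ℂ) ^ (1 - (u a + v b))
          * (hessFactor n (row a) (col b) x : ℂ)).det := by
        rw [← Complex.ofRealHom_eq_coe, RingHom.map_det]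
        congr 1
        ext a b
        simp [pd2_ffun, hessOrder, u, v]
    _ = _ := by
        rw [Matrix.det_of_pow_one_sub_mul _ u v _ hT, Fintype.card_fin]
        congr 1
        exact (RingHom.map_det (Pi.evalRingHom (fun _ => ℂ) x)
          (Matrix.of fun a b y => (hessFactor n (row a) (col b) y : ℂ))).symm

lemma exists_det_pd2_ffun_eq_sum (h : 0 < d + 1) {n : ℝ} (hn : 1 ≤ 2 * n) {m : ℕ}
    (row col : Fin m → Fin (d + 1)) {L U : Fin d → ℤ} (hL : ∀ i, L i ≤ -m) (hU : ∀ i, m ≤ U i) :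
    ∃ α ≤ m, ∃ c : (Fin d → ℤ) → ℂ,
      (∀ x : Eu (d + 1),
        (((Matrix.of fun a b => pd2 (ffun (d + 1) h n) (row a) (col b) x).det : ℝ) : ℂ)
          = (x (Fin.last d) : ℂ) ^ α * ∑ z ∈ Finset.Icc L U, c z * expChar d n z x) ∧
      ∀ z, ‖c z‖ ≤ m.factorial * (2 * n) ^ (2 * m) := by
  obtain ⟨α, hα, hdet⟩ := exists_ofReal_det_pd2_ffun_eq_pow_mul h n row col
  have htrig := IsTrigPoly.det (T := Matrix.of fun a b y => (hessFactor n (row a) (col b) y : ℂ))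
    fun a b => isTrigPoly_hessFactor hn (row a) (col b)
  obtain ⟨c, hc, hcB⟩ := htrig.exists_coeff (L := L) (U := U)
    (fun i => by simpa using hL i) (fun i => by simpa using hU i)
  refine ⟨α, hα, c, fun x => ?_, fun z => ?_⟩
  · rw [hdet, hc]
    simp only [Finset.sum_apply, Pi.smul_apply, smul_eq_mul]
  · simpa [pow_mul] using hcB z

end Hessian

/-- Remark 5.4: Fourier expansion of the submatrix determinant.  There is `C > 0`
depending only on `N` such that `det(H_𝓵^{(I,J)})(x) = x_N^α Σ_{z ∈ Λ} c_z e^{2 n_{ℓ*} i z·x̂}`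
with `α ≤ m` and `|c_z| ≤ C n_{ℓ*}^{2m}`. -/
theorem stmt16 (N : ℕ) (hN : 3 ≤ N) :
    ∃ C : ℝ, 0 < C ∧
    ∀ k : ℕ, 2 ≤ k → ∀ l : Fin N → ℕ,
      (∀ i, l i ∈ Finset.Icc 1 k) → (¬ ∀ i j, l i = l j) →
    ∀ lstar : ℕ, lstar = Finset.univ.sup l →
    ∀ I : Finset (Fin N), I = Finset.filter (fun i => l i = lstar) Finset.univ →
    ∀ (m : ℕ) (hm : I.card = m) (J : Finset (Fin N)) (hJ : J.card = m),
      ∃ α : ℕ, α ≤ m ∧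
      ∃ c : (Fin (N-1) → ℤ) → ℂ,
        (∀ x : Eu N,
          ((Matrix.of fun (a b : Fin m) =>
              pd2 (ffun N (by omega) ((nseq N k (l ((I.orderIsoOfFin hm a) : Fin N)) : ℝ)))
                ((I.orderIsoOfFin hm a) : Fin N) ((J.orderIsoOfFin hJ b) : Fin N) x).det : ℂ)
          = ((x (lastIdx N (by omega)) : ℝ) : ℂ)^α *
            ∑ z ∈ Finset.Icc (fun _ : Fin (N-1) => -((N:ℤ)-1)) (fun _ : Fin (N-1) => (N:ℤ)-1),
              c z * Complex.exp (2 * ((nseq N k lstar : ℝ) : ℂ) * Complex.I *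
                ∑ i : Fin (N-1), (z i : ℂ) * ((x (Fin.castLE (Nat.sub_le N 1) i) : ℝ) : ℂ))) ∧
        (∀ z ∈ Finset.Icc (fun _ : Fin (N-1) => -((N:ℤ)-1)) (fun _ : Fin (N-1) => (N:ℤ)-1),
          ‖c z‖ ≤ C * ((nseq N k lstar : ℝ))^(2*m)) := by
  obtain ⟨d, rfl⟩ : ∃ d, N = d + 1 := ⟨N - 1, by omega⟩
  refine ⟨(d + 1).factorial * 2 ^ (2 * (d + 1)), by positivity, ?_⟩
  intro k hk l _ hne lstar _ I hI m hm J hJ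
  have hn : 1 ≤ 2 * (nseq (d + 1) k lstar : ℝ) := by
    have : 1 ≤ nseq (d + 1) k lstar := Nat.one_le_pow _ _ (by omega)
    have : (1 : ℝ) ≤ nseq (d + 1) k lstar := Nat.one_le_cast.mpr this
    linarith
  have hmd : m ≤ d := by
    have := Finset.card_filter_eq_lt_card hne lstar
    rw [← hI, hm, Fintype.card_fin] at this
    omega
  have hmem : ∀ i ∈ I, l i = lstar := fun i hi => by
    rw [hI] at hi
    exact (Finset.mem_filter.mp hi).2
  have hrow (a : Fin m) : l (I.orderIsoOfFin hm a) = lstar := hmem _ (I.orderIsoOfFin hm a).2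
  obtain ⟨α, hα, c, hc, hcB⟩ := exists_det_pd2_ffun_eq_sum (by omega) hn
    (fun a => (I.orderIsoOfFin hm a : Fin (d + 1))) (fun b => (J.orderIsoOfFin hJ b : Fin (d + 1)))
    (L := fun _ => -(((d + 1 : ℕ) : ℤ) - 1)) (U := fun _ => ((d + 1 : ℕ) : ℤ) - 1)
    (fun _ => by push_cast; omega) (fun _ => by push_cast; omega)
  refine ⟨α, hα, c, fun x => ?_, fun z _ => (hcB z).trans ?_⟩
  · simp only [hrow]
    exact hc x
  · rw [mul_pow, ← mul_assoc]
    gcongr <;> first | omega | norm_num
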